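/- Let t ≥ 1, q ≥ 1 be fixed, and let Φ_N : R^{N×tq} → R^{q×q} be a sequence of uniformly pseudo-Lipschitz functions of order k. Let κ be a tq×tq covariance matrix and Z_κ ~ N(0, κ ⊗ I_N). Then the map κ ↦ sup_{N≥1} ‖E[Φ_N(Z_κ)] − E[Φ_N(Z_{κ'})]‖ tends to 0 as κ' → κ; i.e., lim_{κ'→κ} sup_{N≥1} ‖E[Φ_N(Z_κ)] − E[Φ_N(Z_{κ'})]‖ = 0. -/

import Mathlib

/-!
Write `s = ‖Z̃‖_F / √N` for a standard Gaussian `Z̃ ∈ ℝ^{N×d}`. Since `‖Z̃ A‖_F ≤ ‖Z̃‖_F ‖A‖_F`,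
the pseudo-Lipschitz bound gives `|Φ(Z̃ A') - Φ(Z̃ A)| ≤ L ‖A' - A‖_F (s + 2 C^{k-1} s^k)`
whenever `‖A‖_F, ‖A'‖_F ≤ C`, and the power-mean inequality bounds `E[s^{2m}]` by
`d^m E[g^{2m}]` for `g ~ N(0,1)`, independently of `N`. So `E[Φ_N(Z̃ κ^{1/2})]` is Lipschitz in
`κ^{1/2}` on bounded sets, uniformly in `N`, and it remains to use that the positive semidefinite
square root, being a continuous functional calculus, depends continuously on `κ`.
-/

open MeasureTheory ProbabilityTheory

noncomputable section

/-- Frobenius norm of `X ∈ ℝ^{N×d}` (as a function array). -/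
def frobF {N d : ℕ} (X : Fin N → Fin d → ℝ) : ℝ :=
  Real.sqrt (∑ i, ∑ j, (X i j) ^ 2)

/-- Frobenius norm of a `q × q` matrix. -/
def frobM {q : ℕ} (M : Matrix (Fin q) (Fin q) ℝ) : ℝ :=
  Real.sqrt (∑ i, ∑ j, (M i j) ^ 2)

/-- A `q×q`-matrix-valued function on `ℝ^{N×d}` is pseudo-Lipschitz of order `k` with
constant `L` (Frobenius norms). -/
def PLmatVal (N d q k : ℕ) (L : ℝ)
    (Φ : (Fin N → Fin d → ℝ) → Matrix (Fin q) (Fin q) ℝ) : Prop :=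
  ∀ X Y : Fin N → Fin d → ℝ,
    frobM (Φ X - Φ Y) ≤
      L * (1 + (frobF X / Real.sqrt N) ^ (k - 1) + (frobF Y / Real.sqrt N) ^ (k - 1)) *
        (frobF (fun i j => X i j - Y i j) / Real.sqrt N)

/-- The law of an `N × d` array of i.i.d. standard Gaussians. -/
def stdGaussianMatrix (N d : ℕ) : Measure (Fin N → Fin d → ℝ) :=
  Measure.pi fun _ : Fin N => Measure.pi fun _ : Fin d => gaussianReal 0 1

/-- The positive semidefinite square root of a positive semidefinite matrix
(the definition `Matrix.PosSemidef.sqrt` of the older Mathlib, since removed). -/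
def Matrix.PosSemidef.sqrt {n : Type*} [Fintype n] [DecidableEq n]
    {A : Matrix n n ℝ} (hA : A.PosSemidef) : Matrix n n ℝ :=
  hA.1.eigenvectorUnitary.1 * Matrix.diagonal (Real.sqrt ∘ hA.1.eigenvalues) *
    (star hA.1.eigenvectorUnitary : Matrix n n ℝ)

/-- `E[Φ(Z_κ)]` where `Z_κ ~ N(0, κ ⊗ I_N)` is realized as `Z̃ κ^{1/2}` with `Z̃`
standard Gaussian and `κ^{1/2}` the positive semidefinite square root. -/
def gaussExpect {N d q : ℕ} (Φ : (Fin N → Fin d → ℝ) → Matrix (Fin q) (Fin q) ℝ)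
    {κ : Matrix (Fin d) (Fin d) ℝ} (hκ : κ.PosSemidef) : Matrix (Fin q) (Fin q) ℝ :=
  Matrix.of fun a b =>
    ∫ z, Φ (fun i j => ∑ l, z i l * hκ.sqrt l j) a b ∂(stdGaussianMatrix N d)

open Filter Topology

section Frobenius

variable {N d e : ℕ}

lemma frobF_nonneg (X : Fin N → Fin d → ℝ) : 0 ≤ frobF X := Real.sqrt_nonneg _

lemma frobF_div_sqrt_nonneg (X : Fin N → Fin d → ℝ) : 0 ≤ frobF X / Real.sqrt N :=
  div_nonneg (frobF_nonneg X) (Real.sqrt_nonneg N)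

lemma sq_frobF (X : Fin N → Fin d → ℝ) : frobF X ^ 2 = ∑ i, ∑ j, X i j ^ 2 :=
  Real.sq_sqrt (by positivity)

lemma frobF_zero : frobF (0 : Fin N → Fin d → ℝ) = 0 := by simp [frobF]

@[fun_prop]
lemma continuous_frobF : Continuous (frobF : (Fin N → Fin d → ℝ) → ℝ) :=
  Real.continuous_sqrt.comp (by fun_prop)

lemma frobF_mul_le (z : Fin N → Fin d → ℝ) (A : Fin d → Fin e → ℝ) :
    frobF (fun i j => ∑ l, z i l * A l j) ≤ frobF z * frobF A := by
  rw [frobF, frobF, frobF, ← Real.sqrt_mul (by positivity)]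
  refine Real.sqrt_le_sqrt ?_
  calc ∑ i, ∑ j, (∑ l, z i l * A l j) ^ 2
      ≤ ∑ i, ∑ j, (∑ l, z i l ^ 2) * ∑ l, A l j ^ 2 := by
        gcongr with i _ j _
        exact Finset.sum_mul_sq_le_sq_mul_sq _ _ _
    _ = (∑ i, ∑ l, z i l ^ 2) * ∑ l, ∑ j, A l j ^ 2 := by
        rw [Finset.sum_mul, Finset.sum_comm (γ := Fin d)]
        simp only [Finset.mul_sum]

lemma frobF_mul_div_sqrt_le (z : Fin N → Fin d → ℝ) (A : Fin d → Fin e → ℝ) :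
    frobF (fun i j => ∑ l, z i l * A l j) / Real.sqrt N ≤ frobF A * (frobF z / Real.sqrt N) := by
  rw [← mul_div_assoc, mul_comm (frobF A)]
  gcongr
  exact frobF_mul_le z A

end Frobenius

section FrobeniusMatrix

variable {q : ℕ}

lemma abs_apply_le_frobM (M : Matrix (Fin q) (Fin q) ℝ) (a b : Fin q) : |M a b| ≤ frobM M := by
  rw [← Real.sqrt_sq_eq_abs]
  refine Real.sqrt_le_sqrt ?_
  calc M a b ^ 2 ≤ ∑ j, M a j ^ 2 :=
        Finset.single_le_sum (fun j _ => sq_nonneg (M a j)) (Finset.mem_univ b)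
    _ ≤ ∑ i, ∑ j, M i j ^ 2 :=
        Finset.single_le_sum (f := fun i => ∑ j, M i j ^ 2) (fun i _ => by positivity)
          (Finset.mem_univ a)

lemma frobM_le_of_abs_apply_le {M : Matrix (Fin q) (Fin q) ℝ} {B : ℝ} (hB : 0 ≤ B)
    (h : ∀ a b, |M a b| ≤ B) : frobM M ≤ q * B := by
  rw [frobM, ← Real.sqrt_sq (by positivity : 0 ≤ (q : ℝ) * B)]
  refine Real.sqrt_le_sqrt ?_
  calc ∑ i, ∑ j, M i j ^ 2 ≤ ∑ _i : Fin q, ∑ _j : Fin q, B ^ 2 := by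
        refine Finset.sum_le_sum fun i _ => Finset.sum_le_sum fun j _ => ?_
        exact sq_le_sq' (abs_le.mp (h i j)).1 (abs_le.mp (h i j)).2
    _ = (q * B) ^ 2 := by
        simp only [Finset.sum_const, Finset.card_univ, Fintype.card_fin, nsmul_eq_mul]; ring

end FrobeniusMatrix

namespace PLmatVal

variable {N d q k : ℕ} {L : ℝ} {Φ : (Fin N → Fin d → ℝ) → Matrix (Fin q) (Fin q) ℝ}

lemma abs_apply_sub_le (hΦ : PLmatVal N d q k L Φ) (X Y : Fin N → Fin d → ℝ) (a b : Fin q) :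
    |Φ X a b - Φ Y a b| ≤
      L * (1 + (frobF X / Real.sqrt N) ^ (k - 1) + (frobF Y / Real.sqrt N) ^ (k - 1)) *
        (frobF (fun i j => X i j - Y i j) / Real.sqrt N) :=
  (abs_apply_le_frobM (Φ X - Φ Y) a b).trans (hΦ X Y)

lemma continuous_apply (hΦ : PLmatVal N d q k L Φ) (a b : Fin q) :
    Continuous fun X => Φ X a b := by
  refine continuous_iff_continuousAt.2 fun X₀ => ?_
  have hbound := (by fun_prop : Continuous fun X : Fin N → Fin d → ℝ =>
    L * (1 + (frobF X / Real.sqrt N) ^ (k - 1) + (frobF X₀ / Real.sqrt N) ^ (k - 1)) *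
      (frobF (fun i j => X i j - X₀ i j) / Real.sqrt N)).tendsto X₀
  rw [show frobF (fun i j => X₀ i j - X₀ i j) = 0 by simp [frobF], zero_div, mul_zero] at hbound
  exact tendsto_iff_norm_sub_tendsto_zero.2 <| squeeze_zero (fun _ => norm_nonneg _)
    (fun X => (Real.norm_eq_abs _).trans_le (hΦ.abs_apply_sub_le X X₀ a b)) hbound

end PLmatVal

section Gaussian

variable {N d : ℕ}

instance (N d : ℕ) : IsProbabilityMeasure (stdGaussianMatrix N d) := by
  unfold stdGaussianMatrix; infer_instance

lemma measurePreserving_stdGaussianMatrix_apply (i : Fin N) (l : Fin d) :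
    MeasurePreserving (fun z : Fin N → Fin d → ℝ => z i l) (stdGaussianMatrix N d)
      (gaussianReal 0 1) :=
  (measurePreserving_eval (fun _ : Fin d => gaussianReal 0 1) l).comp
    (measurePreserving_eval (fun _ : Fin N => Measure.pi fun _ : Fin d => gaussianReal 0 1) i)

lemma integrable_pow_gaussianReal (μ : ℝ) (v : NNReal) (n : ℕ) :
    Integrable (fun x : ℝ => x ^ n) (gaussianReal μ v) := by
  refine (integrable_norm_iff (by fun_prop)).1 ?_
  simpa [norm_pow] using (memLp_id_gaussianReal (μ := μ) (v := v) n).integrable_norm_pow'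

lemma integrable_stdGaussianMatrix_apply_pow (i : Fin N) (l : Fin d) (n : ℕ) :
    Integrable (fun z : Fin N → Fin d → ℝ => z i l ^ n) (stdGaussianMatrix N d) :=
  (measurePreserving_stdGaussianMatrix_apply i l).integrable_comp_of_integrable
    (integrable_pow_gaussianReal 0 1 n)

lemma integral_stdGaussianMatrix_apply_pow (i : Fin N) (l : Fin d) (n : ℕ) :
    ∫ z, z i l ^ n ∂stdGaussianMatrix N d = ∫ x, x ^ n ∂gaussianReal 0 1 := by
  have hf := measurePreserving_stdGaussianMatrix_apply i l
  rw [← hf.map_eq, integral_map hf.measurable.aemeasurable (by fun_prop)]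

lemma integrable_sum_sum_pow (n : ℕ) :
    Integrable (fun z : Fin N → Fin d → ℝ => ∑ i, ∑ l, z i l ^ n) (stdGaussianMatrix N d) :=
  integrable_finsetSum _ fun i _ => integrable_finsetSum _ fun l _ =>
    integrable_stdGaussianMatrix_apply_pow i l n

lemma integral_sum_sum_pow (n : ℕ) :
    ∫ z, ∑ i, ∑ l, z i l ^ n ∂stdGaussianMatrix N d = N * d * ∫ x, x ^ n ∂gaussianReal 0 1 := by
  rw [integral_finsetSum _ fun i _ => integrable_finsetSum _ fun l _ =>
    integrable_stdGaussianMatrix_apply_pow i l n]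
  calc ∑ i, ∫ z, ∑ l, z i l ^ n ∂stdGaussianMatrix N d
      = ∑ _i : Fin N, ∑ _l : Fin d, ∫ x, x ^ n ∂gaussianReal 0 1 :=
        Finset.sum_congr rfl fun i _ => by
          rw [integral_finsetSum _ fun l _ => integrable_stdGaussianMatrix_apply_pow i l n]
          simp only [integral_stdGaussianMatrix_apply_pow]
    _ = N * d * ∫ x, x ^ n ∂gaussianReal 0 1 := by
        simp only [Finset.sum_const, Finset.card_univ, Fintype.card_fin, nsmul_eq_mul]; ring

lemma pow_le_one_add_pow_two_mul {s : ℝ} (hs : 0 ≤ s) (j : ℕ) : s ^ j ≤ 1 + s ^ (2 * j) := by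
  rcases le_total s 1 with h | h
  · linarith [pow_le_one₀ hs h (n := j), pow_nonneg hs (2 * j)]
  · linarith [pow_le_pow_right₀ h (by omega : j ≤ 2 * j)]

lemma frobF_div_sqrt_pow_le (hN : 0 < N) (z : Fin N → Fin d → ℝ) (m : ℕ) :
    (frobF z / Real.sqrt N) ^ (m + 1) ≤ 1 + d ^ m / N * ∑ i, ∑ l, z i l ^ (2 * (m + 1)) := by
  have hpower := pow_sum_le_card_mul_sum_pow (s := Finset.univ)
    (f := fun p : Fin N × Fin d => z p.1 p.2 ^ 2) (fun _ _ => sq_nonneg _) m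
  simp only [Finset.card_univ, Fintype.card_prod, Fintype.card_fin, Fintype.sum_prod_type,
    ← pow_mul] at hpower
  have heven :
      (frobF z / Real.sqrt N) ^ (2 * (m + 1)) ≤ d ^ m / N * ∑ i, ∑ l, z i l ^ (2 * (m + 1)) :=
    calc (frobF z / Real.sqrt N) ^ (2 * (m + 1))
        = (∑ i, ∑ l, z i l ^ 2) ^ (m + 1) / N ^ (m + 1) := by
          rw [pow_mul, div_pow, sq_frobF, Real.sq_sqrt (Nat.cast_nonneg N), div_pow]
      _ ≤ (N * d : ℕ) ^ m * (∑ i, ∑ l, z i l ^ (2 * (m + 1))) / N ^ (m + 1) := by gcongr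
      _ = d ^ m / N * ∑ i, ∑ l, z i l ^ (2 * (m + 1)) := by
          have : (N : ℝ) ≠ 0 := by positivity
          push_cast; field_simp; ring
  linarith [pow_le_one_add_pow_two_mul (frobF_div_sqrt_nonneg z) (m + 1)]

lemma integrable_frobF_div_sqrt_pow (hN : 0 < N) (j : ℕ) :
    Integrable (fun z : Fin N → Fin d → ℝ => (frobF z / Real.sqrt N) ^ j)
      (stdGaussianMatrix N d) := by
  rcases j with _ | m
  · simp
  have hdom : Integrable (fun z : Fin N → Fin d → ℝ =>
      1 + d ^ m / N * ∑ i, ∑ l, z i l ^ (2 * (m + 1))) (stdGaussianMatrix N d) :=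
    (integrable_const 1).add ((integrable_sum_sum_pow _).const_mul _)
  refine hdom.mono' (by fun_prop : Continuous _).aestronglyMeasurable
    (Eventually.of_forall fun z => ?_)
  rw [Real.norm_eq_abs, abs_of_nonneg (pow_nonneg (frobF_div_sqrt_nonneg z) _)]
  exact frobF_div_sqrt_pow_le hN z m

lemma integral_frobF_div_sqrt_pow_le (hN : 0 < N) (j : ℕ) :
    ∫ z, (frobF z / Real.sqrt N) ^ j ∂stdGaussianMatrix N d ≤
      1 + d ^ j * ∫ x, x ^ (2 * j) ∂gaussianReal 0 1 := by
  rcases j with _ | m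
  · simp
  calc ∫ z, (frobF z / Real.sqrt N) ^ (m + 1) ∂stdGaussianMatrix N d
      ≤ ∫ z, 1 + d ^ m / N * ∑ i, ∑ l, z i l ^ (2 * (m + 1)) ∂stdGaussianMatrix N d :=
        integral_mono (integrable_frobF_div_sqrt_pow hN _)
          ((integrable_const 1).add ((integrable_sum_sum_pow _).const_mul _))
          (frobF_div_sqrt_pow_le hN · m)
    _ = 1 + d ^ (m + 1) * ∫ x, x ^ (2 * (m + 1)) ∂gaussianReal 0 1 := by
        rw [integral_add (integrable_const 1) ((integrable_sum_sum_pow _).const_mul _),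
          integral_const_mul, integral_sum_sum_pow]
        have : (N : ℝ) ≠ 0 := by positivity
        simp only [integral_const, probReal_univ, smul_eq_mul, mul_one, add_right_inj]
        field_simp; ring

lemma integrable_frobF_div_sqrt_add_mul_pow (hN : 0 < N) (c : ℝ) (j : ℕ) :
    Integrable (fun z : Fin N → Fin d → ℝ =>
      frobF z / Real.sqrt N + c * (frobF z / Real.sqrt N) ^ j) (stdGaussianMatrix N d) :=
  (by simpa using integrable_frobF_div_sqrt_pow hN 1 : Integrable _ _).add
    ((integrable_frobF_div_sqrt_pow hN j).const_mul c)

end Gaussian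

namespace PLmatVal

variable {N d e q k : ℕ} {L : ℝ} {Φ : (Fin N → Fin e → ℝ) → Matrix (Fin q) (Fin q) ℝ}

lemma abs_apply_mul_sub_le (hL : 0 ≤ L) (hΦ : PLmatVal N e q k L Φ)
    {A A' : Fin d → Fin e → ℝ} {C : ℝ} (hA : frobF A ≤ C) (hA' : frobF A' ≤ C)
    (z : Fin N → Fin d → ℝ) (a b : Fin q) :
    |Φ (fun i j => ∑ l, z i l * A' l j) a b - Φ (fun i j => ∑ l, z i l * A l j) a b| ≤
      L * frobF (fun l j => A' l j - A l j) *
        (frobF z / Real.sqrt N + 2 * C ^ (k - 1) * (frobF z / Real.sqrt N) ^ (k - 1 + 1)) := by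
  set s := frobF z / Real.sqrt N
  have hs : 0 ≤ s := frobF_div_sqrt_nonneg z
  have hC : 0 ≤ C := (frobF_nonneg A).trans hA
  have hdiff : (fun i j => ∑ l, z i l * A' l j - ∑ l, z i l * A l j) =
      fun i j => ∑ l, z i l * (A' l j - A l j) := by
    ext i j
    simp only [mul_sub, Finset.sum_sub_distrib]
  have hX' := (frobF_mul_div_sqrt_le z A').trans (mul_le_mul_of_nonneg_right hA' hs)
  have hX := (frobF_mul_div_sqrt_le z A).trans (mul_le_mul_of_nonneg_right hA hs)
  calc _ ≤ L * (1 + (C * s) ^ (k - 1) + (C * s) ^ (k - 1)) *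
        (frobF (fun l j => A' l j - A l j) * s) := by
        refine (hΦ.abs_apply_sub_le _ _ a b).trans ?_
        rw [hdiff]
        gcongr
        any_goals exact frobF_div_sqrt_nonneg _
        exact frobF_mul_div_sqrt_le z _
    _ = _ := by ring

lemma integrable_apply_mul (hN : 0 < N) (hL : 0 ≤ L) (hΦ : PLmatVal N e q k L Φ)
    (A : Fin d → Fin e → ℝ) (a b : Fin q) :
    Integrable (fun z => Φ (fun i j => ∑ l, z i l * A l j) a b) (stdGaussianMatrix N d) := by
  have hdom : Integrable (fun z : Fin N → Fin d → ℝ => |Φ 0 a b| + L * frobF A *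
      (frobF z / Real.sqrt N + 2 * frobF A ^ (k - 1) * (frobF z / Real.sqrt N) ^ (k - 1 + 1)))
      (stdGaussianMatrix N d) :=
    (integrable_const _).add ((integrable_frobF_div_sqrt_add_mul_pow hN _ _).const_mul _)
  refine hdom.mono' ((hΦ.continuous_apply a b).comp (by fun_prop)).aestronglyMeasurable
    (Eventually.of_forall fun z => ?_)
  have hbound :=
    hΦ.abs_apply_mul_sub_le hL (A := 0) (A' := A) (frobF_zero.trans_le (frobF_nonneg A)) le_rfl z a b
  simp only [Pi.zero_apply, mul_zero, Finset.sum_const_zero, sub_zero] at hbound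
  change |_ - Φ 0 a b| ≤ L * frobF A * _ at hbound
  rw [Real.norm_eq_abs]
  linarith [abs_sub_abs_le_abs_sub (Φ (fun i j => ∑ l, z i l * A l j) a b) (Φ 0 a b)]

lemma abs_integral_apply_mul_sub_le (hN : 0 < N) (hL : 0 ≤ L) (hΦ : PLmatVal N e q k L Φ)
    {A A' : Fin d → Fin e → ℝ} {C : ℝ} (hA : frobF A ≤ C) (hA' : frobF A' ≤ C) (a b : Fin q) :
    |∫ z, Φ (fun i j => ∑ l, z i l * A' l j) a b ∂stdGaussianMatrix N d -
        ∫ z, Φ (fun i j => ∑ l, z i l * A l j) a b ∂stdGaussianMatrix N d| ≤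
      L * frobF (fun l j => A' l j - A l j) * ∫ z, (frobF z / Real.sqrt N +
        2 * C ^ (k - 1) * (frobF z / Real.sqrt N) ^ (k - 1 + 1)) ∂stdGaussianMatrix N d := by
  have hf' := hΦ.integrable_apply_mul hN hL A' a b
  have hf := hΦ.integrable_apply_mul hN hL A a b
  have hdom : Integrable (fun z : Fin N → Fin d → ℝ =>
      frobF z / Real.sqrt N + 2 * C ^ (k - 1) * (frobF z / Real.sqrt N) ^ (k - 1 + 1))
      (stdGaussianMatrix N d) :=
    integrable_frobF_div_sqrt_add_mul_pow hN _ _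
  rw [← integral_sub hf' hf, ← integral_const_mul]
  exact abs_integral_le_integral_abs.trans <| integral_mono (hf'.sub hf).abs (hdom.const_mul _)
    fun z => hΦ.abs_apply_mul_sub_le hL hA hA' z a b

end PLmatVal

theorem exists_frobM_gaussExpect_sub_le (d q k : ℕ) {L : ℝ} (hL : 0 ≤ L) (C : ℝ) :
    ∃ K : ℝ, ∀ N, 0 < N → ∀ Φ : (Fin N → Fin d → ℝ) → Matrix (Fin q) (Fin q) ℝ,
      PLmatVal N d q k L Φ → ∀ {κ κ' : Matrix (Fin d) (Fin d) ℝ} (hκ : κ.PosSemidef)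
        (hκ' : κ'.PosSemidef), frobF hκ.sqrt ≤ C → frobF hκ'.sqrt ≤ C →
          frobM (gaussExpect Φ hκ' - gaussExpect Φ hκ) ≤ K * frobF (hκ'.sqrt - hκ.sqrt) := by
  set B : ℕ → ℝ := fun j => 1 + d ^ j * ∫ x, x ^ (2 * j) ∂gaussianReal 0 1
  refine ⟨q * L * (B 1 + 2 * C ^ (k - 1) * B (k - 1 + 1)),
    fun N hN Φ hΦ κ κ' hκ hκ' hC hC' => ?_⟩
  have hC₀ : 0 ≤ C := (frobF_nonneg _).trans hC
  have hmoment : ∫ z, (frobF z / Real.sqrt N +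
      2 * C ^ (k - 1) * (frobF z / Real.sqrt N) ^ (k - 1 + 1)) ∂stdGaussianMatrix N d ≤
        B 1 + 2 * C ^ (k - 1) * B (k - 1 + 1) := by
    rw [integral_add (by simpa using integrable_frobF_div_sqrt_pow hN 1)
      ((integrable_frobF_div_sqrt_pow hN _).const_mul _), integral_const_mul]
    gcongr
    · simpa [B] using integral_frobF_div_sqrt_pow_le (d := d) hN 1
    · exact integral_frobF_div_sqrt_pow_le hN _
  calc frobM (gaussExpect Φ hκ' - gaussExpect Φ hκ)
      ≤ q * (L * frobF (hκ'.sqrt - hκ.sqrt) * ∫ z, (frobF z / Real.sqrt N +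
          2 * C ^ (k - 1) * (frobF z / Real.sqrt N) ^ (k - 1 + 1)) ∂stdGaussianMatrix N d) :=
        frobM_le_of_abs_apply_le
          (mul_nonneg (mul_nonneg hL (frobF_nonneg _)) (integral_nonneg fun z => by
            have := frobF_div_sqrt_nonneg z; positivity))
          fun a b => hΦ.abs_integral_apply_mul_sub_le hN hL hC hC' a b
    _ ≤ q * (L * frobF (hκ'.sqrt - hκ.sqrt) * (B 1 + 2 * C ^ (k - 1) * B (k - 1 + 1))) := by
        have := frobF_nonneg (hκ'.sqrt - hκ.sqrt)
        gcongr
    _ = _ := by ring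

lemma Matrix.PosSemidef.sqrt_eq_cfc {n : Type*} [Fintype n] [DecidableEq n]
    {A : Matrix n n ℝ} (hA : A.PosSemidef) : hA.sqrt = cfc Real.sqrt A := by
  rw [hA.1.cfc_eq, Matrix.IsHermitian.cfc, Matrix.PosSemidef.sqrt]
  simp [Function.comp_def]

theorem Matrix.continuousOn_cfc {n : Type*} [Fintype n] [DecidableEq n] {f : ℝ → ℝ}
    (hf : Continuous f) :
    ContinuousOn (cfc f : Matrix n n ℝ → Matrix n n ℝ) {A | A.IsHermitian} := by
  open scoped Matrix.Norms.L2Operator in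
  exact ContinuousOn.cfc_of_mem_nhdsSet (s := Set.univ) f univ_mem continuousOn_id
    (fun A hA => Matrix.isHermitian_iff_isSelfAdjoint.mp hA) hf.continuousOn

theorem Matrix.exists_forall_abs_sub_lt_of_eventually_nhdsWithin {m n : Type*} [Fintype m]
    [Fintype n] {κ : Matrix m n ℝ} {s : Set (Matrix m n ℝ)} {P : Matrix m n ℝ → Prop}
    (h : ∀ᶠ A in 𝓝[s] κ, P A) : ∃ δ > 0, ∀ A ∈ s, (∀ i j, |A i j - κ i j| < δ) → P A := by
  rw [eventually_nhdsWithin_iff] at h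
  obtain ⟨δ, hδ, hball⟩ := (Metric.eventually_nhds_iff (α := m → n → ℝ)).mp h
  refine ⟨δ, hδ, fun A hA hclose => hball ?_ hA⟩
  refine (dist_pi_lt_iff hδ).2 fun i => (dist_pi_lt_iff hδ).2 fun j => ?_
  simpa only [Real.dist_eq] using hclose i j

theorem gaussExpect_uniformly_continuous_in_covariance_general
    (t q k : ℕ) (L : ℝ) (hL : 0 ≤ L)
    (Φ : ∀ N : ℕ, (Fin N → Fin (t * q) → ℝ) → Matrix (Fin q) (Fin q) ℝ)
    (hΦ : ∀ N, PLmatVal N (t * q) q k L (Φ N))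
    (κ : Matrix (Fin (t * q)) (Fin (t * q)) ℝ) (hκ : κ.PosSemidef) :
    ∀ ε > (0 : ℝ), ∃ δ > (0 : ℝ),
      ∀ (κ' : Matrix (Fin (t * q)) (Fin (t * q)) ℝ) (hκ' : κ'.PosSemidef),
        (∀ i j, |κ' i j - κ i j| < δ) →
        ∀ N : ℕ, 1 ≤ N →
          frobM (gaussExpect (Φ N) hκ' - gaussExpect (Φ N) hκ) ≤ ε := by
  intro ε hε
  obtain ⟨K, hK⟩ := exists_frobM_gaussExpect_sub_le (t * q) q k hL (frobF hκ.sqrt + 1)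
  have hsqrt : Tendsto (cfc Real.sqrt) (𝓝[{A | A.IsHermitian}] κ) (𝓝 hκ.sqrt) :=
    hκ.sqrt_eq_cfc ▸ Matrix.continuousOn_cfc Real.continuous_sqrt κ hκ.1
  have hbdd : ∀ᶠ A : Matrix (Fin (t * q)) (Fin (t * q)) ℝ in 𝓝[{A | A.IsHermitian}] κ,
      frobF (cfc Real.sqrt A : Matrix _ _ ℝ) ≤ frobF hκ.sqrt + 1 :=
    ((continuous_frobF.tendsto _).comp hsqrt).eventually (eventually_le_nhds (lt_add_one _))
  have hsmall :
      ∀ᶠ A in 𝓝[{A | A.IsHermitian}] κ, K * frobF (cfc Real.sqrt A - hκ.sqrt) ≤ ε := by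
    have hcont : Continuous fun A : Matrix (Fin (t * q)) (Fin (t * q)) ℝ =>
        K * frobF (A - hκ.sqrt) :=
      continuous_const.mul (continuous_frobF.comp (continuous_sub_right _))
    exact ((hcont.tendsto _).comp hsqrt).eventually
      (eventually_le_nhds (by simpa [frobF] using hε))
  obtain ⟨δ, hδ, hδκ⟩ := Matrix.exists_forall_abs_sub_lt_of_eventually_nhdsWithin (hbdd.and hsmall)
  refine ⟨δ, hδ, fun κ' hκ' hclose N hN => ?_⟩
  obtain ⟨hbdd', hsmall'⟩ := hδκ κ' hκ'.1 hclose
  rw [← hκ'.sqrt_eq_cfc] at hbdd' hsmall'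
  exact (hK N hN (Φ N) (hΦ N) hκ hκ' (le_add_of_nonneg_right zero_le_one) hbdd').trans hsmall'

/-- Uniform (in `N`) continuity of Gaussian expectations of uniformly pseudo-Lipschitz
matrix-valued functions with respect to the covariance:
`lim_{κ' → κ} sup_{N ≥ 1} ‖E[Φ_N(Z_κ)] − E[Φ_N(Z_{κ'})]‖ = 0`. -/
theorem gaussExpect_uniformly_continuous_in_covariance
    (t q k : ℕ) (ht : 1 ≤ t) (hq : 1 ≤ q) (L : ℝ) (hL : 0 ≤ L)
    (Φ : ∀ N : ℕ, (Fin N → Fin (t * q) → ℝ) → Matrix (Fin q) (Fin q) ℝ)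
    (hΦ : ∀ N, PLmatVal N (t * q) q k L (Φ N))
    (κ : Matrix (Fin (t * q)) (Fin (t * q)) ℝ) (hκ : κ.PosSemidef) :
    ∀ ε > (0 : ℝ), ∃ δ > (0 : ℝ),
      ∀ (κ' : Matrix (Fin (t * q)) (Fin (t * q)) ℝ) (hκ' : κ'.PosSemidef),
        (∀ i j, |κ' i j - κ i j| < δ) →
        ∀ N : ℕ, 1 ≤ N →
          frobM (gaussExpect (Φ N) hκ' - gaussExpect (Φ N) hκ) ≤ ε :=
  gaussExpect_uniformly_continuous_in_covariance_general t q k L hL Φ hΦ κ hκ
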